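/- arXiv:2302.03345 — 3 statements merged into one kernel-verified Lean document; each statement's English description precedes it below -/
import Mathlib

section
/- Let α ∈ (0, 1/2), T > 0, η₀ ∈ ℝ, let b : ℝ → ℝ be Lipschitz and let ζ : [0,T] → ℝ be (1−α)-Hölder continuous. For ε > 0 let x^ε : [0,T] → ℝ be the unique continuous solution of x^ε_t = η₀ + ζ_t + ∫₀ᵗ [ b(x^ε_s) + (1/ε) f(x^ε_s) ] ds, and let v : [0,T] → ℝ be the unique continuous solution of v_t = η₀ + ζ_t + ∫₀ᵗ b(v_s) ds, and u : [0,T] → ℝ the unique continuous solution of u_t = η₀ + ζ_t + ∫₀ᵗ b( u_s + max_{s' ∈ [0,s]} u_{s'}⁻ ) ds. Then for every ε > 0 and t ∈ [0,T], v_t ≤ x^ε_t and |x^ε_t| ≤ |v_t| + 2 max_{s ∈ [0,t]} |u_s|; in particular sup_{ε > 0} |x^ε_t| ≤ |v_t| + 2 max_{s ∈ [0,t]} |u_s|. -/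
/-!
Both estimates are comparison principles: subtracting two of the integral equations cancels the
rough signal `ζ`, leaving a difference `g` whose increments are bounded by `∫ q` with `q`
continuous and `q ≤ K g` wherever `g ≥ 0`. Such a `g` starting at `g 0 ≤ 0` stays nonpositive,
since it cannot cross the barrier `δ exp ((|K| + 1) (t - T))` for any `δ > 0`.
For `v ≤ x^ε` take `g = v - x^ε`: the penalty `f (x^ε) / ε ≥ 0` only pushes `x^ε` up.
For `x^ε ≤ u + L`, with `L` the running maximum of `u⁻`, take `g = x^ε - (u + L)`: `L` is
nondecreasing, and where `x^ε ≥ u + L ≥ 0` the penalty vanishes.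
Then `-|v| ≤ v ≤ x^ε ≤ u + L ≤ 2 max |u|`.
-/

open MeasureTheory Set Filter Topology

noncomputable section

/-- `f` is `γ`-Hölder continuous on `[a,b]`. -/
def HolderOnIcc (γ a b : ℝ) (f : ℝ → ℝ) : Prop :=
  ∃ C : ℝ, 0 ≤ C ∧ ∀ s ∈ Set.Icc a b, ∀ t ∈ Set.Icc a b, |f t - f s| ≤ C * |t - s| ^ γ

/-- The penalization function `f`: a `C²_b` nonincreasing function vanishing on `[0, ∞)`
with `0 < f x ≤ x⁻` for `x < 0`. -/
def PenaltyFun (f : ℝ → ℝ) : Prop :=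
  ContDiff ℝ 2 f ∧ Antitone f ∧
  (∃ M : ℝ, ∀ x : ℝ, |deriv f x| ≤ M ∧ |deriv (deriv f) x| ≤ M) ∧
  (∀ x : ℝ, 0 ≤ x → f x = 0) ∧
  (∀ x : ℝ, x < 0 → 0 < f x ∧ f x ≤ -x)

/-- The running maximum of the negative part of `u` on `[0, s]`. -/
def runNegMax (u : ℝ → ℝ) (s : ℝ) : ℝ :=
  sSup ((fun s' => max 0 (-u s')) '' Set.Icc 0 s)

theorem LipschitzWith.sub_le_mul_sub {b : ℝ → ℝ} {K : NNReal} (hb : LipschitzWith K b) {y z : ℝ}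
    (h : z ≤ y) : b y - b z ≤ K * (y - z) := by
  have := hb.dist_le_mul y z
  rw [Real.dist_eq, Real.dist_eq, abs_of_nonneg (sub_nonneg.2 h)] at this
  exact (le_abs_self _).trans this

theorem frequently_slope_lt_of_sub_le_integral {g q : ℝ → ℝ} {a b : ℝ}
    (hq : ContinuousOn q (Icc a b))
    (hinc : ∀ s ∈ Icc a b, ∀ t ∈ Icc a b, s ≤ t → g t - g s ≤ ∫ r in s..t, q r)
    {s : ℝ} (hs : s ∈ Ico a b) {r : ℝ} (hr : q s < r) : ∃ᶠ z in 𝓝[>] s, slope g s z < r := by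
  have hIcc : Icc a b ∈ 𝓝[>] s :=
    mem_of_superset (Ioc_mem_nhdsGT hs.2) (Ioc_subset_Icc_self.trans (Icc_subset_Icc_left hs.1))
  have hF : HasDerivWithinAt (fun z => ∫ r in s..z, q r) (q s) (Ici s) s :=
    intervalIntegral.integral_hasDerivWithinAt_right IntervalIntegrable.refl
      ((hq.stronglyMeasurableAtFilter_nhdsWithin measurableSet_Icc s).filter_mono
        (nhdsWithin_le_of_mem hIcc))
      ((hq s (Ico_subset_Icc_self hs)).mono_of_mem_nhdsWithin hIcc)
  have hslope : ∀ᶠ z in 𝓝[>] s, slope g s z ≤ slope (fun z => ∫ r in s..z, q r) s z := by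
    filter_upwards [Ioc_mem_nhdsGT hs.2] with z hz
    simp only [slope_def_field, intervalIntegral.integral_same, sub_zero]
    exact div_le_div_of_nonneg_right
      (hinc s (Ico_subset_Icc_self hs) z ⟨hs.1.trans hz.1.le, hz.2⟩ hz.1.le) (sub_pos.2 hz.1).le
  exact (hF.liminf_right_slope_le hr).mp (hslope.mono fun z hz h => hz.trans_lt h)

theorem nonpos_of_sub_le_integral {g q : ℝ → ℝ} {a b K : ℝ}
    (hg : ContinuousOn g (Icc a b)) (hq : ContinuousOn q (Icc a b)) (ha : g a ≤ 0)
    (hinc : ∀ s ∈ Icc a b, ∀ t ∈ Icc a b, s ≤ t → g t - g s ≤ ∫ r in s..t, q r)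
    (hqg : ∀ t ∈ Icc a b, 0 ≤ g t → q t ≤ K * g t) :
    ∀ t ∈ Icc a b, g t ≤ 0 := by
  intro t ht
  refine le_of_forall_pos_le_add fun δ hδ => ?_
  set k := |K| + 1
  have hB (z : ℝ) :
      HasDerivAt (fun z => δ * Real.exp (k * (z - b))) (k * (δ * Real.exp (k * (z - b)))) z :=
    ((((hasDerivAt_id' z).sub_const b).const_mul k).exp.const_mul δ).congr_deriv (by ring)
  have hle := image_le_of_liminf_slope_right_lt_deriv_boundary' hg
    (fun s hs r hr => frequently_slope_lt_of_sub_le_integral hq hinc hs hr)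
    (ha.trans (by positivity)) (fun z _ => (hB z).continuousAt.continuousWithinAt)
    (fun z _ => (hB z).hasDerivWithinAt) ?_ ht
  · calc g t ≤ δ * Real.exp (k * (t - b)) := hle
      _ ≤ 0 + δ := by
        rw [zero_add]
        refine mul_le_of_le_one_right hδ.le (Real.exp_le_one_iff.2 ?_)
        exact mul_nonpos_of_nonneg_of_nonpos (by positivity) (sub_nonpos.2 ht.2)
  · intro z hz hgz
    have hpos : 0 < g z := hgz ▸ by positivity
    calc q z ≤ K * g z := hqg z (Ico_subset_Icc_self hz) hpos.le
      _ ≤ |K| * g z := mul_le_mul_of_nonneg_right (le_abs_self K) hpos.le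
      _ < k * g z := mul_lt_mul_of_pos_right (lt_add_one _) hpos
      _ = _ := by rw [hgz]

theorem continuousOn_sSup_image_Icc {h : ℝ → ℝ} {T : ℝ} (hh : ContinuousOn h (Icc 0 T)) :
    ContinuousOn (fun s => sSup (h '' Icc 0 s)) (Icc 0 T) := by
  rcases lt_or_ge T 0 with hT | hT
  · simp [Icc_eq_empty_of_lt hT]
  set H := IccExtend hT ((Icc 0 T).domRestrict h)
  have hH : Continuous H := (continuousOn_iff_continuous_domRestrict.1 hh).Icc_extend'
  -- rescaling `[0, s] = [0, 1] * s` turns the running supremum into a supremum over a fixed compact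
  have hsup : Continuous fun s => sSup ((fun r => H (r * s)) '' Icc 0 1) :=
    isCompact_Icc.continuous_sSup (hH.comp (continuous_snd.mul continuous_fst))
  refine hsup.continuousOn.congr fun s hs => ?_
  have hHh : EqOn H h (Icc 0 s) := fun r hr =>
    IccExtend_of_mem hT _ (Icc_subset_Icc_right hs.2 hr)
  show sSup (h '' Icc 0 s) = sSup ((H ∘ (· * s)) '' Icc 0 1)
  rw [← hHh.image_eq, image_comp, image_mul_right_Icc zero_le_one hs.1, zero_mul, one_mul]

theorem monotoneOn_sSup_image_Icc {h : ℝ → ℝ} {T : ℝ} (hh : ContinuousOn h (Icc 0 T)) :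
    MonotoneOn (fun s => sSup (h '' Icc 0 s)) (Icc 0 T) := fun _ hs _ ht hst =>
  csSup_le_csSup (isCompact_Icc.bddAbove_image (hh.mono (Icc_subset_Icc_right ht.2)))
    ((nonempty_Icc.2 hs.1).image h) (image_mono (Icc_subset_Icc_right hst))

theorem le_sSup_image_Icc {h : ℝ → ℝ} {t : ℝ} (hh : ContinuousOn h (Icc 0 t)) {s : ℝ}
    (hs : s ∈ Icc 0 t) : h s ≤ sSup (h '' Icc 0 t) :=
  le_csSup (isCompact_Icc.bddAbove_image hh) (mem_image_of_mem h hs)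

theorem sub_eq_add_integral_of_eq_integral {y ζ q : ℝ → ℝ} {c T : ℝ}
    (hq : ContinuousOn q (Icc 0 T)) (hy : ∀ t ∈ Icc 0 T, y t = c + ζ t + ∫ r in 0..t, q r)
    {s t : ℝ} (hs : s ∈ Icc 0 T) (ht : t ∈ Icc 0 T) :
    y t - y s = ζ t - ζ s + ∫ r in s..t, q r := by
  have hint : ∀ t ∈ Icc 0 T, IntervalIntegrable q volume 0 t := fun t ht =>
    (hq.mono (uIcc_subset_Icc ⟨le_rfl, ht.1.trans ht.2⟩ ht)).intervalIntegrable
  rw [hy t ht, hy s hs, ← intervalIntegral.integral_interval_sub_left (hint t ht) (hint s hs)]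
  ring

section Comparison

variable {b ζ y z p : ℝ → ℝ} {K : NNReal} {c T : ℝ}

theorem le_of_eq_integral_of_nonneg_drift (hb : LipschitzWith K b)
    (hy_cont : ContinuousOn y (Icc 0 T)) (hy : ∀ t ∈ Icc 0 T, y t = c + ζ t + ∫ s in 0..t, b (y s))
    (hz_cont : ContinuousOn z (Icc 0 T)) (hp_cont : ContinuousOn p (Icc 0 T))
    (hp_nonneg : ∀ s ∈ Icc 0 T, 0 ≤ p s)
    (hz : ∀ t ∈ Icc 0 T, z t = c + ζ t + ∫ s in 0..t, (b (z s) + p s)) :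
    ∀ t ∈ Icc 0 T, y t ≤ z t := by
  have hby : ContinuousOn (fun s => b (y s)) (Icc 0 T) := hb.continuous.comp_continuousOn hy_cont
  have hbz : ContinuousOn (fun s => b (z s) + p s) (Icc 0 T) :=
    (hb.continuous.comp_continuousOn hz_cont).add hp_cont
  intro t ht
  have h0 : (0 : ℝ) ∈ Icc 0 T := ⟨le_rfl, ht.1.trans ht.2⟩
  refine sub_nonpos.1 <| nonpos_of_sub_le_integral (g := fun s => y s - z s)
    (q := fun s => b (y s) - (b (z s) + p s)) (K := K) (hy_cont.sub hz_cont) (hby.sub hbz)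
    (by simp [hy 0 h0, hz 0 h0]) (fun s hs s' hs' _ => le_of_eq ?_) (fun s hs hgs => ?_) t ht
  · rw [intervalIntegral.integral_sub ((hby.mono (uIcc_subset_Icc hs hs')).intervalIntegrable)
      ((hbz.mono (uIcc_subset_Icc hs hs')).intervalIntegrable)]
    linear_combination sub_eq_add_integral_of_eq_integral hby hy hs hs' -
      sub_eq_add_integral_of_eq_integral hbz hz hs hs'
  · have := hb.sub_le_mul_sub (sub_nonneg.1 hgs)
    have := hp_nonneg s hs
    linarith

theorem le_add_of_eq_integral_of_monotoneOn (hb : LipschitzWith K b)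
    (hz_cont : ContinuousOn z (Icc 0 T)) (hp_cont : ContinuousOn p (Icc 0 T))
    (hp_zero : ∀ s ∈ Icc 0 T, 0 ≤ z s → p s = 0)
    (hz : ∀ t ∈ Icc 0 T, z t = c + ζ t + ∫ s in 0..t, (b (z s) + p s))
    {L : ℝ → ℝ} (hL_cont : ContinuousOn L (Icc 0 T)) (hL_mono : MonotoneOn L (Icc 0 T))
    (hL0 : 0 ≤ L 0) (hy_cont : ContinuousOn y (Icc 0 T)) (hyL : ∀ s ∈ Icc 0 T, 0 ≤ y s + L s)
    (hy : ∀ t ∈ Icc 0 T, y t = c + ζ t + ∫ s in 0..t, b (y s + L s)) :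
    ∀ t ∈ Icc 0 T, z t ≤ y t + L t := by
  have hbz : ContinuousOn (fun s => b (z s) + p s) (Icc 0 T) :=
    (hb.continuous.comp_continuousOn hz_cont).add hp_cont
  have hby : ContinuousOn (fun s => b (y s + L s)) (Icc 0 T) :=
    hb.continuous.comp_continuousOn (hy_cont.add hL_cont)
  intro t ht
  have h0 : (0 : ℝ) ∈ Icc 0 T := ⟨le_rfl, ht.1.trans ht.2⟩
  refine sub_nonpos.1 <| nonpos_of_sub_le_integral (g := fun s => z s - (y s + L s))
    (q := fun s => b (z s) + p s - b (y s + L s)) (K := K) (hz_cont.sub (hy_cont.add hL_cont))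
    (hbz.sub hby) (by simp [hy 0 h0, hz 0 h0, hL0]) (fun s hs s' hs' hss' => ?_)
    (fun s hs hgs => ?_) t ht
  · rw [intervalIntegral.integral_sub ((hbz.mono (uIcc_subset_Icc hs hs')).intervalIntegrable)
      ((hby.mono (uIcc_subset_Icc hs hs')).intervalIntegrable)]
    have := hL_mono hs hs' hss'
    linarith [sub_eq_add_integral_of_eq_integral hbz hz hs hs',
      sub_eq_add_integral_of_eq_integral hby hy hs hs']
  · have hzy : y s + L s ≤ z s := sub_nonneg.1 hgs
    have := hb.sub_le_mul_sub hzy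
    simp only [hp_zero s hs ((hyL s hs).trans hzy), add_zero]
    linarith

end Comparison

section RunNegMax

variable {u : ℝ → ℝ} {T : ℝ}

theorem continuousOn_runNegMax (hu : ContinuousOn u (Icc 0 T)) :
    ContinuousOn (runNegMax u) (Icc 0 T) :=
  continuousOn_sSup_image_Icc (ContinuousOn.sup continuousOn_const hu.neg)

theorem monotoneOn_runNegMax (hu : ContinuousOn u (Icc 0 T)) :
    MonotoneOn (runNegMax u) (Icc 0 T) :=
  monotoneOn_sSup_image_Icc (ContinuousOn.sup continuousOn_const hu.neg)

theorem max_zero_neg_le_runNegMax (hu : ContinuousOn u (Icc 0 T)) {s : ℝ} (hs : s ∈ Icc 0 T) :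
    max 0 (-u s) ≤ runNegMax u s :=
  le_sSup_image_Icc ((ContinuousOn.sup continuousOn_const hu.neg).mono (Icc_subset_Icc_right hs.2))
    ⟨hs.1, le_rfl⟩

theorem runNegMax_le_sSup_abs (hu : ContinuousOn u (Icc 0 T)) (hT : 0 ≤ T) :
    runNegMax u T ≤ sSup ((fun s => |u s|) '' Icc 0 T) :=
  csSup_le ((nonempty_Icc.2 hT).image _) <| forall_mem_image.2 fun _ hs =>
    (max_le (abs_nonneg _) (neg_le_abs _)).trans (le_sSup_image_Icc hu.abs hs)

theorem sSup_abs_image_Icc_nonneg (hu : ContinuousOn u (Icc 0 T)) (hT : 0 ≤ T) :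
    0 ≤ sSup ((fun s => |u s|) '' Icc 0 T) :=
  (abs_nonneg _).trans (le_sSup_image_Icc hu.abs ⟨le_rfl, hT⟩)

theorem abs_le_abs_add_two_mul_sSup_abs (hu : ContinuousOn u (Icc 0 T)) (hT : 0 ≤ T) {v x : ℝ}
    (hvx : v ≤ x) (hxu : x ≤ u T + runNegMax u T) :
    |x| ≤ |v| + 2 * sSup ((fun s => |u s|) '' Icc 0 T) := by
  have hS := sSup_abs_image_Icc_nonneg hu hT
  have hu_le := (le_abs_self _).trans (le_sSup_image_Icc hu.abs ⟨hT, le_rfl⟩)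
  have hL_le := runNegMax_le_sSup_abs hu hT
  rw [abs_le]
  constructor <;> linarith [neg_abs_le v, abs_nonneg v]

theorem le_add_runNegMax_of_eq_integral {b ζ z p : ℝ → ℝ} {K : NNReal} {c : ℝ}
    (hb : LipschitzWith K b) (hz_cont : ContinuousOn z (Icc 0 T))
    (hp_cont : ContinuousOn p (Icc 0 T)) (hp_zero : ∀ s ∈ Icc 0 T, 0 ≤ z s → p s = 0)
    (hz : ∀ t ∈ Icc 0 T, z t = c + ζ t + ∫ s in 0..t, (b (z s) + p s))
    (hu_cont : ContinuousOn u (Icc 0 T))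
    (hu : ∀ t ∈ Icc 0 T, u t = c + ζ t + ∫ s in 0..t, b (u s + runNegMax u s)) :
    ∀ t ∈ Icc 0 T, z t ≤ u t + runNegMax u t := by
  intro t ht
  have hneg {s : ℝ} (hs : s ∈ Icc 0 T) := max_zero_neg_le_runNegMax hu_cont hs
  refine le_add_of_eq_integral_of_monotoneOn hb hz_cont hp_cont hp_zero hz
    (continuousOn_runNegMax hu_cont) (monotoneOn_runNegMax hu_cont)
    ((le_max_left _ _).trans (hneg ⟨le_rfl, ht.1.trans ht.2⟩)) hu_cont (fun s hs => ?_) hu t ht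
  linarith [(le_max_right _ _).trans (hneg hs)]

end RunNegMax

theorem PenaltyFun.nonneg {f : ℝ → ℝ} (hf : PenaltyFun f) (y : ℝ) : 0 ≤ f y := by
  obtain ⟨-, -, -, hf_zero, hf_neg⟩ := hf
  exact (le_or_gt 0 y).elim (fun h => (hf_zero y h).ge) fun h => (hf_neg y h).1.le

theorem penalized_uniform_bound_general
    (T η₀ : ℝ)
    (b : ℝ → ℝ) (K : NNReal) (hb : LipschitzWith K b)
    (ζ : ℝ → ℝ)
    (f : ℝ → ℝ) (hf : PenaltyFun f)
    (x : ℝ → ℝ → ℝ)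
    (hx_cont : ∀ ε : ℝ, 0 < ε → ContinuousOn (x ε) (Set.Icc 0 T))
    (hx : ∀ ε : ℝ, 0 < ε → ∀ t ∈ Set.Icc 0 T,
      x ε t = η₀ + ζ t + ∫ s in (0 : ℝ)..t, (b (x ε s) + (1 / ε) * f (x ε s)))
    (v : ℝ → ℝ)
    (hv_cont : ContinuousOn v (Set.Icc 0 T))
    (hv : ∀ t ∈ Set.Icc 0 T, v t = η₀ + ζ t + ∫ s in (0 : ℝ)..t, b (v s))
    (u : ℝ → ℝ)
    (hu_cont : ContinuousOn u (Set.Icc 0 T))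
    (hu : ∀ t ∈ Set.Icc 0 T,
      u t = η₀ + ζ t + ∫ s in (0 : ℝ)..t, b (u s + runNegMax u s)) :
    (∀ ε : ℝ, 0 < ε → ∀ t ∈ Set.Icc 0 T, v t ≤ x ε t) ∧
    (∀ ε : ℝ, 0 < ε → ∀ t ∈ Set.Icc 0 T,
      |x ε t| ≤ |v t| + 2 * sSup ((fun s => |u s|) '' Set.Icc 0 t)) ∧
    (∀ t ∈ Set.Icc 0 T,
      sSup ((fun ε => |x ε t|) '' Set.Ioi 0) ≤
        |v t| + 2 * sSup ((fun s => |u s|) '' Set.Icc 0 t)) := by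
  have hf_nonneg := hf.nonneg
  obtain ⟨hf_smooth, -, -, hf_zero, -⟩ := hf
  have hpen_cont (ε : ℝ) (hε : 0 < ε) : ContinuousOn (fun s => 1 / ε * f (x ε s)) (Icc 0 T) :=
    continuousOn_const.mul (hf_smooth.continuous.comp_continuousOn (hx_cont ε hε))
  have lower (ε : ℝ) (hε : 0 < ε) : ∀ t ∈ Icc 0 T, v t ≤ x ε t :=
    le_of_eq_integral_of_nonneg_drift hb hv_cont hv (hx_cont ε hε) (hpen_cont ε hε)
      (fun s _ => mul_nonneg (by positivity) (hf_nonneg _)) (hx ε hε)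
  have upper (ε : ℝ) (hε : 0 < ε) : ∀ t ∈ Icc 0 T, x ε t ≤ u t + runNegMax u t :=
    le_add_runNegMax_of_eq_integral hb (hx_cont ε hε) (hpen_cont ε hε)
      (fun s _ hs => by rw [hf_zero _ hs, mul_zero]) (hx ε hε) hu_cont hu
  have bound (ε : ℝ) (hε : 0 < ε) (t : ℝ) (ht : t ∈ Icc 0 T) :
      |x ε t| ≤ |v t| + 2 * sSup ((fun s => |u s|) '' Icc 0 t) :=
    abs_le_abs_add_two_mul_sSup_abs (hu_cont.mono (Icc_subset_Icc_right ht.2)) ht.1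
      (lower ε hε t ht) (upper ε hε t ht)
  refine ⟨lower, bound, fun t ht =>
    Real.sSup_le (forall_mem_image.2 fun ε hε => bound ε hε t ht) ?_⟩
  have := sSup_abs_image_Icc_nonneg (hu_cont.mono (Icc_subset_Icc_right ht.2)) ht.1
  positivity

/-- Lower bound `v ≤ x^ε` and the uniform-in-`ε` bound
`|x^ε_t| ≤ |v_t| + 2 max_{s ≤ t} |u_s|` for the penalized solutions. -/
theorem penalized_uniform_bound
    (α T η₀ : ℝ) (hα : α ∈ Set.Ioo (0 : ℝ) (1 / 2)) (hT : 0 < T)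
    (b : ℝ → ℝ) (K : NNReal) (hb : LipschitzWith K b)
    (ζ : ℝ → ℝ) (hζ : HolderOnIcc (1 - α) 0 T ζ)
    (f : ℝ → ℝ) (hf : PenaltyFun f)
    (x : ℝ → ℝ → ℝ)
    (hx_cont : ∀ ε : ℝ, 0 < ε → ContinuousOn (x ε) (Set.Icc 0 T))
    (hx : ∀ ε : ℝ, 0 < ε → ∀ t ∈ Set.Icc 0 T,
      x ε t = η₀ + ζ t + ∫ s in (0 : ℝ)..t, (b (x ε s) + (1 / ε) * f (x ε s)))
    (v : ℝ → ℝ)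
    (hv_cont : ContinuousOn v (Set.Icc 0 T))
    (hv : ∀ t ∈ Set.Icc 0 T, v t = η₀ + ζ t + ∫ s in (0 : ℝ)..t, b (v s))
    (u : ℝ → ℝ)
    (hu_cont : ContinuousOn u (Set.Icc 0 T))
    (hu : ∀ t ∈ Set.Icc 0 T,
      u t = η₀ + ζ t + ∫ s in (0 : ℝ)..t, b (u s + runNegMax u s)) :
    (∀ ε : ℝ, 0 < ε → ∀ t ∈ Set.Icc 0 T, v t ≤ x ε t) ∧
    (∀ ε : ℝ, 0 < ε → ∀ t ∈ Set.Icc 0 T,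
      |x ε t| ≤ |v t| + 2 * sSup ((fun s => |u s|) '' Set.Icc 0 t)) ∧
    (∀ t ∈ Set.Icc 0 T,
      sSup ((fun ε => |x ε t|) '' Set.Ioi 0) ≤
        |v t| + 2 * sSup ((fun s => |u s|) '' Set.Icc 0 t)) :=
  penalized_uniform_bound_general T η₀ b K hb ζ f hf x hx_cont hx v hv_cont hv u hu_cont hu
end
end

section
/- Let α ∈ (0, 1/2), T > 0 and let z : [0,T] → ℝ be (1−α)-Hölder continuous with z₀ ≥ 0. Define y_t = max_{s ∈ [0,t]} (z_s)⁻ and x_t = z_t + y_t. Then x is (1−α)-Hölder continuous and ‖x‖_{1−α,[0,T]} ≤ 2 ‖z‖_{1−α,[0,T]}, where ‖f‖_{1−α,[0,T]} = sup_{t ∈ [0,T]} |f(t)| + sup_{0 ≤ s < t ≤ T} |f(t) − f(s)| / (t − s)^{1−α}. -/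
open MeasureTheory Set Filter Topology

noncomputable section

/-- The `γ`-Hölder norm of `f` on `[0,T]`:
`sup_{t} |f t| + sup_{s < t} |f t - f s| / (t - s) ^ γ`. -/
def holderNorm (γ T : ℝ) (f : ℝ → ℝ) : ℝ :=
  sSup ((fun t => |f t|) '' Set.Icc 0 T) +
    sSup {r : ℝ | ∃ s t : ℝ, 0 ≤ s ∧ s < t ∧ t ≤ T ∧ r = |f t - f s| / (t - s) ^ γ}

/-!
The regulator `y_t = max_{s ≤ t} (z_s)⁻` is the running maximum of `g = z⁻`. Over `[s, t]` a
running maximum can grow by at most `sup_{u ∈ [s,t]} (g u - g s)`, and `g` is `1`-Lipschitz in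
`z`, so `y` inherits every Hölder constant of `z`; hence `x = z + y` has twice that constant.
Similarly `0 ≤ y ≤ sup |z|`, so `sup |x| ≤ 2 sup |z|`.
-/

def HolderOnIccWith (C γ a b : ℝ) (f : ℝ → ℝ) : Prop :=
  ∀ s ∈ Icc a b, ∀ t ∈ Icc a b, |f t - f s| ≤ C * |t - s| ^ γ

def supNormIcc (T : ℝ) (f : ℝ → ℝ) : ℝ :=
  sSup ((fun t => |f t|) '' Icc 0 T)

def holderSeminorm (γ T : ℝ) (f : ℝ → ℝ) : ℝ :=
  sSup {r : ℝ | ∃ s t : ℝ, 0 ≤ s ∧ s < t ∧ t ≤ T ∧ r = |f t - f s| / (t - s) ^ γ}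

theorem holderNorm_eq (γ T : ℝ) (f : ℝ → ℝ) :
    holderNorm γ T f = supNormIcc T f + holderSeminorm γ T f := rfl

section Holder

variable {f : ℝ → ℝ} {C γ a b T : ℝ}

theorem HolderOnIccWith.of_le
    (h : ∀ s ∈ Icc a b, ∀ t ∈ Icc a b, s ≤ t → |f t - f s| ≤ C * (t - s) ^ γ) :
    HolderOnIccWith C γ a b f := by
  intro s hs t ht
  rcases le_total s t with hst | hts
  · simpa only [abs_of_nonneg (sub_nonneg.2 hst)] using h s hs t ht hst
  · simpa only [abs_sub_comm, abs_of_nonneg (sub_nonneg.2 hts)] using h t ht s hs hts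

theorem HolderOnIccWith.abs_le (hγ : 0 ≤ γ) (hC : 0 ≤ C) (hf : HolderOnIccWith C γ 0 T f)
    {t : ℝ} (ht : t ∈ Icc 0 T) : |f t| ≤ |f 0| + C * T ^ γ := by
  have hinc : |f t - f 0| ≤ C * T ^ γ := by
    calc |f t - f 0| ≤ C * |t - 0| ^ γ := hf 0 ⟨le_rfl, ht.1.trans ht.2⟩ t ht
      _ ≤ C * T ^ γ := by
        rw [sub_zero, abs_of_nonneg ht.1]
        exact mul_le_mul_of_nonneg_left (Real.rpow_le_rpow ht.1 ht.2 hγ) hC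
  linarith [abs_sub_abs_le_abs_sub (f t) (f 0)]

theorem HolderOnIccWith.bddAbove_abs_image (hγ : 0 ≤ γ) (hC : 0 ≤ C)
    (hf : HolderOnIccWith C γ 0 T f) : BddAbove ((fun t => |f t|) '' Icc 0 T) :=
  ⟨|f 0| + C * T ^ γ, by rintro _ ⟨t, ht, rfl⟩; exact hf.abs_le hγ hC ht⟩

theorem abs_le_supNormIcc (hf : BddAbove ((fun t => |f t|) '' Icc 0 T)) {t : ℝ}
    (ht : t ∈ Icc 0 T) : |f t| ≤ supNormIcc T f :=
  le_csSup hf ⟨t, ht, rfl⟩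

theorem supNormIcc_nonneg (T : ℝ) (f : ℝ → ℝ) : 0 ≤ supNormIcc T f :=
  Real.sSup_nonneg (by rintro _ ⟨t, -, rfl⟩; exact abs_nonneg _)

theorem supNormIcc_le {M : ℝ} (hM : 0 ≤ M) (h : ∀ t ∈ Icc 0 T, |f t| ≤ M) :
    supNormIcc T f ≤ M :=
  Real.sSup_le (by rintro _ ⟨t, ht, rfl⟩; exact h t ht) hM

theorem holderSeminorm_nonneg (γ T : ℝ) (f : ℝ → ℝ) : 0 ≤ holderSeminorm γ T f :=
  Real.sSup_nonneg (by
    rintro _ ⟨s, t, -, hst, -, rfl⟩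
    exact div_nonneg (abs_nonneg _) (Real.rpow_nonneg (sub_nonneg.2 hst.le) γ))

theorem div_rpow_le_of_holderOnIccWith (hf : HolderOnIccWith C γ 0 T f) {s t : ℝ} (hs : 0 ≤ s)
    (hst : s < t) (ht : t ≤ T) : |f t - f s| / (t - s) ^ γ ≤ C := by
  have hpos : 0 < t - s := sub_pos.2 hst
  rw [div_le_iff₀ (Real.rpow_pos_of_pos hpos γ)]
  simpa only [abs_of_pos hpos] using hf s ⟨hs, hst.le.trans ht⟩ t ⟨hs.trans hst.le, ht⟩

theorem holderSeminorm_le (hC : 0 ≤ C) (hf : HolderOnIccWith C γ 0 T f) :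
    holderSeminorm γ T f ≤ C :=
  Real.sSup_le (by
    rintro _ ⟨s, t, hs, hst, ht, rfl⟩
    exact div_rpow_le_of_holderOnIccWith hf hs hst ht) hC

theorem HolderOnIcc.holderOnIccWith_holderSeminorm (hf : HolderOnIcc γ 0 T f) :
    HolderOnIccWith (holderSeminorm γ T f) γ 0 T f := by
  obtain ⟨C, -, hC⟩ := hf
  have hbdd : BddAbove {r : ℝ | ∃ s t : ℝ, 0 ≤ s ∧ s < t ∧ t ≤ T ∧
      r = |f t - f s| / (t - s) ^ γ} := by
    refine ⟨C, ?_⟩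
    rintro _ ⟨s, t, hs, hst, ht, rfl⟩
    exact div_rpow_le_of_holderOnIccWith hC hs hst ht
  refine HolderOnIccWith.of_le fun s hs t ht hst => ?_
  rcases hst.eq_or_lt with rfl | hlt
  · simp only [sub_self, abs_zero]
    exact mul_nonneg (holderSeminorm_nonneg γ T f) (Real.rpow_nonneg le_rfl γ)
  · have hpos : 0 < (t - s) ^ γ := Real.rpow_pos_of_pos (sub_pos.2 hlt) γ
    rw [← div_le_iff₀ hpos]
    exact le_csSup hbdd ⟨s, t, hs.1, hlt, ht.2, rfl⟩

end Holder

section RunningSup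

def runningSup (g : ℝ → ℝ) (t : ℝ) : ℝ :=
  sSup (g '' Icc 0 t)

variable {g : ℝ → ℝ} {s t T : ℝ}

theorem le_runningSup (hg : BddAbove (g '' Icc 0 T)) (ht : t ≤ T) {u : ℝ} (hu : u ∈ Icc 0 t) :
    g u ≤ runningSup g t :=
  le_csSup (hg.mono (image_mono (Icc_subset_Icc le_rfl ht))) ⟨u, hu, rfl⟩

theorem runningSup_nonneg (hg : ∀ u ∈ Icc 0 t, 0 ≤ g u) : 0 ≤ runningSup g t :=
  Real.sSup_nonneg (by rintro _ ⟨u, hu, rfl⟩; exact hg u hu)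

theorem runningSup_le {M : ℝ} (hM : 0 ≤ M) (hg : ∀ u ∈ Icc 0 t, g u ≤ M) :
    runningSup g t ≤ M :=
  Real.sSup_le (by rintro _ ⟨u, hu, rfl⟩; exact hg u hu) hM

theorem runningSup_mono (hg : BddAbove (g '' Icc 0 T)) (hs : 0 ≤ s) (hst : s ≤ t)
    (ht : t ≤ T) : runningSup g s ≤ runningSup g t :=
  csSup_le_csSup (hg.mono (image_mono (Icc_subset_Icc le_rfl ht)))
    ⟨g 0, 0, ⟨le_rfl, hs⟩, rfl⟩ (image_mono (Icc_subset_Icc le_rfl hst))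

theorem abs_runningSup_sub_le (hg : BddAbove (g '' Icc 0 T)) (hs : 0 ≤ s) (hst : s ≤ t)
    (ht : t ≤ T) {D : ℝ} (hD : ∀ u ∈ Icc s t, g u ≤ g s + D) :
    |runningSup g t - runningSup g s| ≤ D := by
  have hD0 : 0 ≤ D := by linarith [hD s ⟨le_rfl, hst⟩]
  have hgs : g s ≤ runningSup g s := le_runningSup hg (hst.trans ht) ⟨hs, le_rfl⟩
  have hle : runningSup g t ≤ runningSup g s + D := by
    refine csSup_le ⟨g 0, 0, ⟨le_rfl, hs.trans hst⟩, rfl⟩ ?_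
    rintro _ ⟨u, hu, rfl⟩
    rcases le_total u s with hus | hsu
    · linarith [le_runningSup hg (hst.trans ht) ⟨hu.1, hus⟩]
    · linarith [hD u ⟨hsu, hu.2⟩]
  rw [abs_of_nonneg (sub_nonneg.2 (runningSup_mono hg hs hst ht))]
  linarith

end RunningSup

section Skorokhod

def skorokhodRegulator (z : ℝ → ℝ) : ℝ → ℝ :=
  runningSup fun s => max 0 (-z s)

theorem max_zero_neg_le_abs (a : ℝ) : max 0 (-a) ≤ |a| :=
  max_le (abs_nonneg a) (neg_le_abs a)

theorem abs_max_zero_neg_sub_le (a b : ℝ) : |max 0 (-a) - max 0 (-b)| ≤ |a - b| := by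
  simpa only [max_comm (0 : ℝ), neg_sub_neg, abs_sub_comm] using
    abs_max_sub_max_le_abs (-a) (-b) 0

variable {z : ℝ → ℝ} {C γ T : ℝ}

theorem bddAbove_max_zero_neg_image (hz : BddAbove ((fun t => |z t|) '' Icc 0 T)) :
    BddAbove ((fun s => max 0 (-z s)) '' Icc 0 T) := by
  obtain ⟨M, hM⟩ := hz
  refine ⟨M, ?_⟩
  rintro _ ⟨u, hu, rfl⟩
  exact (max_zero_neg_le_abs _).trans (hM ⟨u, hu, rfl⟩)

theorem holderOnIccWith_skorokhodRegulator (hγ : 0 ≤ γ) (hC : 0 ≤ C)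
    (hz : HolderOnIccWith C γ 0 T z) : HolderOnIccWith C γ 0 T (skorokhodRegulator z) := by
  refine HolderOnIccWith.of_le fun s hs t ht hst => ?_
  refine abs_runningSup_sub_le (bddAbove_max_zero_neg_image (hz.bddAbove_abs_image hγ hC))
    hs.1 hst ht.2 fun u hu => ?_
  have hu' : u ∈ Icc 0 T := ⟨hs.1.trans hu.1, hu.2.trans ht.2⟩
  calc max 0 (-z u) ≤ max 0 (-z s) + |max 0 (-z u) - max 0 (-z s)| := by
        linarith [le_abs_self (max 0 (-z u) - max 0 (-z s))]
    _ ≤ max 0 (-z s) + C * |u - s| ^ γ := by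
        gcongr
        exact (abs_max_zero_neg_sub_le _ _).trans (hz s hs u hu')
    _ ≤ max 0 (-z s) + C * (t - s) ^ γ := by
        rw [abs_of_nonneg (sub_nonneg.2 hu.1)]
        gcongr
        · exact sub_nonneg.2 hu.1
        · exact hu.2

theorem holderOnIccWith_add_skorokhodRegulator (hγ : 0 ≤ γ) (hC : 0 ≤ C)
    (hz : HolderOnIccWith C γ 0 T z) :
    HolderOnIccWith (2 * C) γ 0 T (fun t => z t + skorokhodRegulator z t) := by
  intro s hs t ht
  have hy := holderOnIccWith_skorokhodRegulator hγ hC hz s hs t ht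
  calc |z t + skorokhodRegulator z t - (z s + skorokhodRegulator z s)|
      ≤ |z t - z s| + |skorokhodRegulator z t - skorokhodRegulator z s| := by
        rw [add_sub_add_comm]; exact abs_add_le _ _
    _ ≤ 2 * C * |t - s| ^ γ := by linarith [hz s hs t ht]

theorem abs_add_skorokhodRegulator_le (hz : BddAbove ((fun t => |z t|) '' Icc 0 T)) {t : ℝ}
    (ht : t ∈ Icc 0 T) : |z t + skorokhodRegulator z t| ≤ 2 * supNormIcc T z := by
  have hy0 : 0 ≤ skorokhodRegulator z t := runningSup_nonneg fun _ _ => le_max_left _ _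
  have hyM : skorokhodRegulator z t ≤ supNormIcc T z :=
    runningSup_le (supNormIcc_nonneg T z) fun u hu =>
      (max_zero_neg_le_abs _).trans (abs_le_supNormIcc hz ⟨hu.1, hu.2.trans ht.2⟩)
  calc |z t + skorokhodRegulator z t| ≤ |z t| + skorokhodRegulator z t := by
        simpa only [abs_of_nonneg hy0] using abs_add_le (z t) (skorokhodRegulator z t)
    _ ≤ 2 * supNormIcc T z := by linarith [abs_le_supNormIcc hz ht]

end Skorokhod

theorem skorokhod_holder_bound_general
    (α T : ℝ) (hα : α ∈ Set.Ioo (0 : ℝ) (1 / 2))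
    (z : ℝ → ℝ) (hz : HolderOnIcc (1 - α) 0 T z)
    (y x : ℝ → ℝ)
    (hy : ∀ t : ℝ, y t = sSup ((fun s => max 0 (-z s)) '' Set.Icc 0 t))
    (hx : ∀ t : ℝ, x t = z t + y t) :
    HolderOnIcc (1 - α) 0 T x ∧
    holderNorm (1 - α) T x ≤ 2 * holderNorm (1 - α) T z := by
  have hγ : 0 ≤ 1 - α := by linarith [hα.2]
  obtain rfl : y = skorokhodRegulator z := funext hy
  obtain rfl : x = fun t => z t + skorokhodRegulator z t := funext hx
  have hR := hz.holderOnIccWith_holderSeminorm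
  have hR0 := holderSeminorm_nonneg (1 - α) T z
  obtain ⟨C, hC, hzC : HolderOnIccWith C (1 - α) 0 T z⟩ := hz
  refine ⟨⟨2 * C, by positivity, holderOnIccWith_add_skorokhodRegulator hγ hC hzC⟩, ?_⟩
  have hsup := supNormIcc_le (by linarith [supNormIcc_nonneg T z])
    fun _ => abs_add_skorokhodRegulator_le (hzC.bddAbove_abs_image hγ hC)
  have hsemi :=
    holderSeminorm_le (by positivity) (holderOnIccWith_add_skorokhodRegulator hγ hR0 hR)
  rw [holderNorm_eq, holderNorm_eq]
  linarith

/-- The Skorokhod map preserves `(1-α)`-Hölder continuity, with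
`‖x‖_{1-α} ≤ 2 ‖z‖_{1-α}`. -/
theorem skorokhod_holder_bound
    (α T : ℝ) (hα : α ∈ Set.Ioo (0 : ℝ) (1 / 2)) (hT : 0 < T)
    (z : ℝ → ℝ) (hz : HolderOnIcc (1 - α) 0 T z) (hz0 : 0 ≤ z 0)
    (y x : ℝ → ℝ)
    (hy : ∀ t : ℝ, y t = sSup ((fun s => max 0 (-z s)) '' Set.Icc 0 t))
    (hx : ∀ t : ℝ, x t = z t + y t) :
    HolderOnIcc (1 - α) 0 T x ∧
    holderNorm (1 - α) T x ≤ 2 * holderNorm (1 - α) T z :=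
  skorokhod_holder_bound_general α T hα z hz y x hy hx
end
end

section
/- Let α ∈ (0, 1/2), T > 0, η₀ ∈ ℝ, let b : ℝ → ℝ be twice continuously differentiable with bounded first and second derivatives, and let ζ, h : [0,T] → ℝ be (1−α)-Hölder continuous. For each ε ∈ ℝ let x^ε : [0,T] → ℝ be the unique continuous solution of x^ε_t = η₀ + ζ_t + ε h_t + ∫₀ᵗ b(x^ε_s) ds. Then the difference quotients (x^ε − x^0)/ε converge uniformly on [0,T], as ε → 0, to the unique continuous solution v of the linear equation v_t = h_t + ∫₀ᵗ b'(x^0_s) v_s ds; i.e., the solution map is differentiable in the direction h with derivative v. -/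
/-!
Subtracting the equations for `x^ε` and `x^0`, the difference is driven by `ε h` through the
Lipschitz nonlinearity `b`, so Grönwall's inequality gives `|x^ε - x^0| ≤ K |ε|`. The error
`w = (x^ε - x^0)/ε - v` then satisfies a linear integral inequality whose source term is the
second-order Taylor remainder of `b`, of size `M (x^ε - x^0)² / |ε| = O(|ε|)`, and Grönwall
again gives `sup |w| = O(|ε|)`. The linearized equation is solved explicitly by variation of
constants; uniqueness is the homogeneous case of the same Grönwall estimate.
-/

open MeasureTheory Set Filter Topology

noncomputable section

theorem HolderOnIcc.continuousOn {γ a b : ℝ} {f : ℝ → ℝ} (hγ : 0 < γ)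
    (hf : HolderOnIcc γ a b f) : ContinuousOn f (Icc a b) := by
  obtain ⟨C, -, hC⟩ := hf
  intro s hs
  have hmod : Continuous fun t => C * |t - s| ^ γ :=
    continuous_const.mul <| Continuous.rpow_const (by fun_prop) fun _ => Or.inr hγ.le
  have hlim : Tendsto (fun t => C * |t - s| ^ γ) (𝓝[Icc a b] s) (𝓝 0) := by
    simpa [Real.zero_rpow hγ.ne'] using (hmod.tendsto s).mono_left nhdsWithin_le_nhds
  rw [ContinuousWithinAt, tendsto_iff_norm_sub_tendsto_zero]
  exact squeeze_zero' (Eventually.of_forall fun _ => norm_nonneg _)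
    (eventually_nhdsWithin_of_forall fun t ht => hC s hs t ht) hlim

theorem abs_sub_le_of_abs_deriv_le {f : ℝ → ℝ} {M : ℝ} (hf : Differentiable ℝ f)
    (hM : ∀ x, |deriv f x| ≤ M) (a c : ℝ) : |f c - f a| ≤ M * |c - a| := by
  simpa only [Real.norm_eq_abs] using Convex.norm_image_sub_le_of_norm_deriv_le
    (fun x _ => hf x) (fun x _ => hM x) convex_univ (mem_univ a) (mem_univ c)

theorem abs_sub_sub_deriv_mul_le {b : ℝ → ℝ} {M : ℝ} (hb : Differentiable ℝ b)
    (hb' : Differentiable ℝ (deriv b)) (hM : ∀ x, |deriv (deriv b) x| ≤ M) (a c : ℝ) :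
    |b c - b a - deriv b a * (c - a)| ≤ M * (c - a) ^ 2 := by
  have hφ : ∀ u, HasDerivAt (fun u => b u - deriv b a * u) (deriv b u - deriv b a) u :=
    fun u => by
      have hd := (hb u).hasDerivAt.sub ((hasDerivAt_id' u).const_mul (deriv b a))
      rwa [mul_one] at hd
  have hφ' : ∀ u ∈ uIcc a c, ‖deriv b u - deriv b a‖ ≤ M * |c - a| := fun u hu =>
    (abs_sub_le_of_abs_deriv_le hb' hM a u).trans <|
      mul_le_mul_of_nonneg_left (abs_sub_left_of_mem_uIcc hu) ((abs_nonneg _).trans (hM a))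
  have key := Convex.norm_image_sub_le_of_norm_hasDerivWithin_le
    (fun u _ => (hφ u).hasDerivWithinAt) hφ' (convex_uIcc a c) left_mem_uIcc right_mem_uIcc
  rw [Real.norm_eq_abs] at key
  calc |b c - b a - deriv b a * (c - a)|
      = |b c - deriv b a * c - (b a - deriv b a * a)| := by ring_nf
    _ ≤ M * |c - a| * |c - a| := key
    _ = M * (c - a) ^ 2 := by rw [mul_assoc, ← sq, sq_abs]

theorem ContinuousOn.intervalIntegrable_of_mem_Icc {f : ℝ → ℝ} {a b t : ℝ}
    (hf : ContinuousOn f (Icc a b)) (ht : t ∈ Icc a b) : IntervalIntegrable f volume a t :=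
  (hf.mono (uIcc_subset_Icc (left_mem_Icc.2 (ht.1.trans ht.2)) ht)).intervalIntegrable

theorem ContinuousOn.exists_continuous_eqOn_Icc {f : ℝ → ℝ} {a b : ℝ} (hab : a ≤ b)
    (hf : ContinuousOn f (Icc a b)) : ∃ g : ℝ → ℝ, Continuous g ∧ EqOn g f (Icc a b) :=
  ⟨IccExtend hab ((Icc a b).domRestrict f), continuous_IccExtend_iff.2 hf.domRestrict,
    fun _ hx => IccExtend_of_mem hab _ hx⟩

theorem add_mul_gronwallBound_zero (A M t : ℝ) :
    A + M * gronwallBound 0 M A t = A * Real.exp (M * t) := by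
  rcases eq_or_ne M 0 with rfl | hM
  · simp
  · rw [gronwallBound_of_K_ne_0 hM]
    field_simp
    ring

theorem le_mul_exp_of_le_add_mul_integral {u : ℝ → ℝ} {A M T : ℝ} (hM : 0 ≤ M)
    (hu : ContinuousOn u (Icc 0 T))
    (hle : ∀ t ∈ Icc 0 T, u t ≤ A + M * ∫ s in (0:ℝ)..t, u s) :
    ∀ t ∈ Icc 0 T, u t ≤ A * Real.exp (M * t) := by
  intro t ht
  obtain ⟨u₀, hu₀c, hu₀u⟩ := hu.exists_continuous_eqOn_Icc (ht.1.trans ht.2)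
  have hU : ∀ t ∈ Icc 0 T, ∫ s in (0:ℝ)..t, u₀ s = ∫ s in (0:ℝ)..t, u s := fun t ht =>
    intervalIntegral.integral_congr fun s hs =>
      hu₀u (uIcc_subset_Icc (left_mem_Icc.2 (ht.1.trans ht.2)) ht hs)
  have hU' : ∀ t, HasDerivAt (fun t => ∫ s in (0:ℝ)..t, u₀ s) (u₀ t) t := fun t =>
    (hu₀c.integral_hasStrictDerivAt 0 t).hasDerivAt
  have hUle := le_gronwallBound_of_liminf_deriv_right_le (δ := 0) (K := M) (ε := A)
    (HasDerivAt.continuousOn fun t _ => hU' t)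
    (fun t _ _ hr => (hU' t).hasDerivWithinAt.liminf_right_slope_le hr) (by simp)
    (fun s hs => by
      rw [hu₀u (Ico_subset_Icc_self hs), hU s (Ico_subset_Icc_self hs), add_comm]
      exact hle s (Ico_subset_Icc_self hs)) t ht
  rw [hU t ht, sub_zero] at hUle
  calc u t ≤ A + M * ∫ s in (0:ℝ)..t, u s := hle t ht
    _ ≤ A + M * gronwallBound 0 M A t := by gcongr
    _ = A * Real.exp (M * t) := add_mul_gronwallBound_zero A M t

theorem abs_le_of_abs_sub_integral_le {w F : ℝ → ℝ} {A c M T : ℝ} (hc : 0 ≤ c)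
    (hM : 0 ≤ M) (hw : ContinuousOn w (Icc 0 T)) (hF : ContinuousOn F (Icc 0 T))
    (hF_le : ∀ s ∈ Icc 0 T, |F s| ≤ c + M * |w s|)
    (hw_sub : ∀ t ∈ Icc 0 T, |w t - ∫ s in (0:ℝ)..t, F s| ≤ A) :
    ∀ t ∈ Icc 0 T, |w t| ≤ (A + c * T) * Real.exp (M * T) := by
  have hle : ∀ t ∈ Icc 0 T, |w t| ≤ (A + c * T) + M * ∫ s in (0:ℝ)..t, |w s| := by
    intro t ht
    have hint : IntervalIntegrable (fun s => |w s|) volume 0 t :=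
      hw.abs.intervalIntegrable_of_mem_Icc ht
    have hF_int : |∫ s in (0:ℝ)..t, F s| ≤ c * t + M * ∫ s in (0:ℝ)..t, |w s| :=
      calc |∫ s in (0:ℝ)..t, F s| ≤ ∫ s in (0:ℝ)..t, |F s| :=
            intervalIntegral.abs_integral_le_integral_abs ht.1
        _ ≤ ∫ s in (0:ℝ)..t, (c + M * |w s|) :=
            intervalIntegral.integral_mono_on ht.1 (hF.abs.intervalIntegrable_of_mem_Icc ht)
              (intervalIntegrable_const.add (hint.const_mul M))
              fun s hs => hF_le s ⟨hs.1, hs.2.trans ht.2⟩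
        _ = c * t + M * ∫ s in (0:ℝ)..t, |w s| := by
            rw [intervalIntegral.integral_add intervalIntegrable_const (hint.const_mul M),
              intervalIntegral.integral_const, intervalIntegral.integral_const_mul, smul_eq_mul,
              sub_zero, mul_comm t]
    have hct : c * t ≤ c * T := mul_le_mul_of_nonneg_left ht.2 hc
    linarith [abs_sub_abs_le_abs_sub (w t) (∫ s in (0:ℝ)..t, F s), hw_sub t ht]
  intro t ht
  have hA : 0 ≤ A + c * T :=
    add_nonneg ((abs_nonneg _).trans (hw_sub t ht)) (mul_nonneg hc (ht.1.trans ht.2))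
  calc |w t| ≤ (A + c * T) * Real.exp (M * t) :=
        le_mul_exp_of_le_add_mul_integral hM hw.abs hle t ht
    _ ≤ (A + c * T) * Real.exp (M * T) := by gcongr; exact ht.2

/-- Variation of constants: `v = k + e^B ∫₀ᵗ g k e^{-B}` with `B = ∫₀ᵗ g`. -/
theorem Continuous.exists_linear_volterra_solution {g k : ℝ → ℝ} (hg : Continuous g)
    (hk : Continuous k) :
    ∃ v : ℝ → ℝ, Continuous v ∧ ∀ t, v t = k t + ∫ s in (0:ℝ)..t, g s * v s := by
  set B : ℝ → ℝ := fun t => ∫ s in (0:ℝ)..t, g s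
  have hB : ∀ t, HasDerivAt B (g t) t := fun t => (hg.integral_hasStrictDerivAt 0 t).hasDerivAt
  have hBc : Continuous B := continuous_iff_continuousAt.2 fun t => (hB t).continuousAt
  set F : ℝ → ℝ := fun t => ∫ s in (0:ℝ)..t, g s * k s * Real.exp (-B s)
  have hF : ∀ t, HasDerivAt F (g t * k t * Real.exp (-B t)) t := fun t =>
    ((by fun_prop : Continuous fun s => g s * k s * Real.exp (-B s)).integral_hasStrictDerivAt
      0 t).hasDerivAt
  have hFc : Continuous F := continuous_iff_continuousAt.2 fun t => (hF t).continuousAt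
  set v : ℝ → ℝ := fun t => k t + Real.exp (B t) * F t
  have hvc : Continuous v := by fun_prop
  have hderiv : ∀ t, HasDerivAt (fun t => Real.exp (B t) * F t) (g t * v t) t := fun t => by
    refine ((hB t).exp.mul (hF t)).congr_deriv ?_
    rw [Real.exp_neg]
    field_simp
    ring
  refine ⟨v, hvc, fun t => ?_⟩
  rw [intervalIntegral.integral_eq_sub_of_hasDerivAt (fun s _ => hderiv s)
    ((hg.mul hvc).intervalIntegrable _ _)]
  simp [v, F]

theorem exists_continuousOn_linear_volterra_solution {g k : ℝ → ℝ} {T : ℝ} (hT : 0 ≤ T)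
    (hg : ContinuousOn g (Icc 0 T)) (hk : ContinuousOn k (Icc 0 T)) :
    ∃ v : ℝ → ℝ, ContinuousOn v (Icc 0 T) ∧
      ∀ t ∈ Icc 0 T, v t = k t + ∫ s in (0:ℝ)..t, g s * v s := by
  obtain ⟨g₀, hg₀c, hg₀g⟩ := hg.exists_continuous_eqOn_Icc hT
  obtain ⟨k₀, hk₀c, hk₀k⟩ := hk.exists_continuous_eqOn_Icc hT
  obtain ⟨v, hvc, hv⟩ := hg₀c.exists_linear_volterra_solution hk₀c
  refine ⟨v, hvc.continuousOn, fun t ht => ?_⟩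
  rw [hv t, hk₀k ht, intervalIntegral.integral_congr fun s hs =>
    congrArg (· * v s) (hg₀g (uIcc_subset_Icc (left_mem_Icc.2 hT) ht hs))]

theorem abs_sub_le_of_volterra {φ : ℝ → ℝ → ℝ} {x y f g : ℝ → ℝ} {A M T : ℝ}
    (hM : 0 ≤ M)
    (hφ : ∀ s ∈ Icc 0 T, ∀ p q, |φ s p - φ s q| ≤ M * |p - q|)
    (hx : ContinuousOn x (Icc 0 T)) (hy : ContinuousOn y (Icc 0 T))
    (hφx : ContinuousOn (fun s => φ s (x s)) (Icc 0 T))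
    (hφy : ContinuousOn (fun s => φ s (y s)) (Icc 0 T))
    (hxf : ∀ t ∈ Icc 0 T, x t = f t + ∫ s in (0:ℝ)..t, φ s (x s))
    (hyg : ∀ t ∈ Icc 0 T, y t = g t + ∫ s in (0:ℝ)..t, φ s (y s))
    (hfg : ∀ t ∈ Icc 0 T, |f t - g t| ≤ A) :
    ∀ t ∈ Icc 0 T, |x t - y t| ≤ A * Real.exp (M * T) := by
  simpa using abs_le_of_abs_sub_integral_le (w := fun s => x s - y s)
    (F := fun s => φ s (x s) - φ s (y s)) le_rfl hM
    (hx.sub hy) (hφx.sub hφy) (fun s hs => by simpa using hφ s hs (x s) (y s))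
    fun t ht => by
      rw [intervalIntegral.integral_sub (hφx.intervalIntegrable_of_mem_Icc ht)
        (hφy.intervalIntegrable_of_mem_Icc ht), hxf t ht, hyg t ht]
      convert hfg t ht using 2
      ring

theorem eqOn_of_linear_volterra {a k v w : ℝ → ℝ} {M T : ℝ} (hM : 0 ≤ M)
    (ha : ∀ s ∈ Icc 0 T, |a s| ≤ M) (ha_cont : ContinuousOn a (Icc 0 T))
    (hv : ContinuousOn v (Icc 0 T)) (hw : ContinuousOn w (Icc 0 T))
    (hvk : ∀ t ∈ Icc 0 T, v t = k t + ∫ s in (0:ℝ)..t, a s * v s)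
    (hwk : ∀ t ∈ Icc 0 T, w t = k t + ∫ s in (0:ℝ)..t, a s * w s) :
    EqOn v w (Icc 0 T) := fun t ht => by
  have := abs_sub_le_of_volterra (φ := fun s p => a s * p) (A := 0) hM
    (fun s hs p q => by
      rw [← mul_sub, abs_mul]
      exact mul_le_mul_of_nonneg_right (ha s hs) (abs_nonneg _))
    hv hw (ha_cont.mul hv) (ha_cont.mul hw) hvk hwk (fun _ _ => by simp) t ht
  simpa [sub_eq_zero] using this

theorem abs_div_sub_le_of_volterra {b x y f h v : ℝ → ℝ} {ε K M T : ℝ} (hε : ε ≠ 0)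
    (hM : 0 ≤ M) (hb : Continuous b) (hb'c : Continuous (deriv b))
    (hb' : ∀ p, |deriv b p| ≤ M)
    (hb_taylor : ∀ p q, |b q - b p - deriv b p * (q - p)| ≤ M * (q - p) ^ 2)
    (hx : ContinuousOn x (Icc 0 T)) (hy : ContinuousOn y (Icc 0 T))
    (hv : ContinuousOn v (Icc 0 T))
    (hxf : ∀ t ∈ Icc 0 T, x t = f t + ∫ s in (0:ℝ)..t, b (x s))
    (hyf : ∀ t ∈ Icc 0 T, y t = f t + ε * h t + ∫ s in (0:ℝ)..t, b (y s))
    (hvh : ∀ t ∈ Icc 0 T, v t = h t + ∫ s in (0:ℝ)..t, deriv b (x s) * v s)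
    (hyx : ∀ t ∈ Icc 0 T, |y t - x t| ≤ |ε| * K) :
    ∀ t ∈ Icc 0 T, |(y t - x t) / ε - v t| ≤ M * K ^ 2 * T * Real.exp (M * T) * |ε| := by
  have hε' : 0 < |ε| := abs_pos.2 hε
  have hbx : ContinuousOn (fun s => b (x s)) (Icc 0 T) := hb.comp_continuousOn hx
  have hby : ContinuousOn (fun s => b (y s)) (Icc 0 T) := hb.comp_continuousOn hy
  have hbyx : ContinuousOn (fun s => (b (y s) - b (x s)) / ε) (Icc 0 T) :=
    (hby.sub hbx).div_const ε
  have hb'xv : ContinuousOn (fun s => deriv b (x s) * v s) (Icc 0 T) :=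
    (hb'c.comp_continuousOn hx).mul hv
  have hF_le : ∀ s ∈ Icc 0 T, |(b (y s) - b (x s)) / ε - deriv b (x s) * v s|
      ≤ M * K ^ 2 * |ε| + M * |(y s - x s) / ε - v s| := by
    intro s hs
    have hrem : |(b (y s) - b (x s) - deriv b (x s) * (y s - x s)) / ε| ≤ M * K ^ 2 * |ε| := by
      rw [abs_div, div_le_iff₀ hε']
      calc |b (y s) - b (x s) - deriv b (x s) * (y s - x s)| ≤ M * (y s - x s) ^ 2 :=
            hb_taylor _ _
        _ ≤ M * (|ε| * K) ^ 2 := by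
            rw [← sq_abs]
            gcongr
            exact hyx s hs
        _ = M * K ^ 2 * |ε| * |ε| := by ring
    have hlin : |deriv b (x s) * ((y s - x s) / ε - v s)| ≤ M * |(y s - x s) / ε - v s| := by
      rw [abs_mul]
      exact mul_le_mul_of_nonneg_right (hb' _) (abs_nonneg _)
    calc |(b (y s) - b (x s)) / ε - deriv b (x s) * v s|
        = |(b (y s) - b (x s) - deriv b (x s) * (y s - x s)) / ε
            + deriv b (x s) * ((y s - x s) / ε - v s)| := by
          congr 1
          field_simp
          ring
      _ ≤ _ := (abs_add_le _ _).trans (add_le_add hrem hlin)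
  have hK : 0 ≤ M * K ^ 2 * |ε| := by positivity
  intro t ht
  convert abs_le_of_abs_sub_integral_le (w := fun s => (y s - x s) / ε - v s)
    (F := fun s => (b (y s) - b (x s)) / ε - deriv b (x s) * v s) (A := 0) hK hM
    (((hy.sub hx).div_const ε).sub hv) (hbyx.sub hb'xv) hF_le
    (fun t ht => ?_) t ht using 1
  · ring
  · rw [intervalIntegral.integral_sub (hbyx.intervalIntegrable_of_mem_Icc ht)
      (hb'xv.intervalIntegrable_of_mem_Icc ht), intervalIntegral.integral_div,
      intervalIntegral.integral_sub (hby.intervalIntegrable_of_mem_Icc ht)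
      (hbx.intervalIntegrable_of_mem_Icc ht), hyf t ht, hxf t ht, hvh t ht, abs_nonpos_iff]
    field_simp
    ring

theorem tendsto_sSup_image_abs_of_abs_le {q : ℝ → ℝ → ℝ} {S : Set ℝ} {C : ℝ}
    (hC : 0 ≤ C)
    (hq : ∀ ε ≠ 0, ∀ t ∈ S, |q ε t| ≤ C * |ε|) :
    Tendsto (fun ε => sSup ((fun t => |q ε t|) '' S)) (𝓝[≠] 0) (𝓝 0) := by
  refine squeeze_zero' (g := fun ε => C * |ε|)
    (Eventually.of_forall fun ε => Real.sSup_nonneg ?_)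
    (eventually_nhdsWithin_of_forall fun ε hε => Real.sSup_le ?_ (by positivity)) ?_
  · rintro _ ⟨t, -, rfl⟩
    exact abs_nonneg _
  · rintro _ ⟨t, ht, rfl⟩
    exact hq ε hε t ht
  · exact ((continuous_const.mul continuous_abs).tendsto' 0 0 (by simp)).mono_left
      nhdsWithin_le_nhds

theorem directional_derivative_of_solution_general
    (α T η₀ : ℝ) (hα : α ∈ Set.Ioo (0 : ℝ) (1 / 2)) (hT : 0 < T)
    (b : ℝ → ℝ) (hb : ContDiff ℝ 2 b)
    (hb' : ∃ M : ℝ, ∀ x : ℝ, |deriv b x| ≤ M ∧ |deriv (deriv b) x| ≤ M)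
    (ζ h : ℝ → ℝ)
    (hh : HolderOnIcc (1 - α) 0 T h)
    (x : ℝ → ℝ → ℝ)
    (hx_cont : ∀ ε : ℝ, ContinuousOn (x ε) (Set.Icc 0 T))
    (hx : ∀ ε : ℝ, ∀ t ∈ Set.Icc 0 T,
      x ε t = η₀ + ζ t + ε * h t + ∫ s in (0 : ℝ)..t, b (x ε s)) :
    ∃ v : ℝ → ℝ, ContinuousOn v (Set.Icc 0 T) ∧
      (∀ t ∈ Set.Icc 0 T,
        v t = h t + ∫ s in (0 : ℝ)..t, deriv b (x 0 s) * v s) ∧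
      (∀ v' : ℝ → ℝ, ContinuousOn v' (Set.Icc 0 T) →
        (∀ t ∈ Set.Icc 0 T,
          v' t = h t + ∫ s in (0 : ℝ)..t, deriv b (x 0 s) * v' s) →
        ∀ t ∈ Set.Icc 0 T, v' t = v t) ∧
      Filter.Tendsto
        (fun ε => sSup ((fun t => |(x ε t - x 0 t) / ε - v t|) '' Set.Icc 0 T))
        (nhdsWithin 0 {(0 : ℝ)}ᶜ) (nhds 0) := by
  obtain ⟨M, hM⟩ := hb'
  have hM0 : 0 ≤ M := (abs_nonneg _).trans (hM 0).1
  have hb_diff : Differentiable ℝ b := hb.differentiable two_ne_zero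
  have hb'_cont : Continuous (deriv b) := hb.continuous_deriv one_le_two
  have hhc : ContinuousOn h (Icc 0 T) := hh.continuousOn (by linarith [hα.2])
  have hb'x : ContinuousOn (fun s => deriv b (x 0 s)) (Icc 0 T) :=
    hb'_cont.comp_continuousOn (hx_cont 0)
  obtain ⟨v, hvc, hv⟩ := exists_continuousOn_linear_volterra_solution hT.le hb'x hhc
  refine ⟨v, hvc, hv, fun v' hv'c hv' t ht => ?_, ?_⟩
  · exact eqOn_of_linear_volterra hM0 (fun s _ => (hM _).1) hb'x hv'c hvc hv' hv ht
  obtain ⟨H, hH⟩ := isCompact_Icc.exists_bound_of_continuousOn hhc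
  have hclose : ∀ ε, ∀ t ∈ Icc 0 T, |x ε t - x 0 t| ≤ |ε| * (H * Real.exp (M * T)) := by
    intro ε t ht
    rw [← mul_assoc]
    refine abs_sub_le_of_volterra (φ := fun _ p => b p) hM0
      (fun _ _ p q => abs_sub_le_of_abs_deriv_le hb_diff (fun y => (hM y).1) q p) (hx_cont ε)
      (hx_cont 0) (hb.continuous.comp_continuousOn (hx_cont ε))
      (hb.continuous.comp_continuousOn (hx_cont 0)) (hx ε) (hx 0) (fun t ht => ?_) t ht
    rw [zero_mul, add_zero, add_sub_cancel_left, abs_mul, ← Real.norm_eq_abs (h t)]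
    exact mul_le_mul_of_nonneg_left (hH t ht) (abs_nonneg ε)
  refine tendsto_sSup_image_abs_of_abs_le ?_ fun ε hε t ht =>
    abs_div_sub_le_of_volterra hε hM0 hb.continuous hb'_cont (fun p => (hM p).1)
      (abs_sub_sub_deriv_mul_le hb_diff hb.differentiable_deriv_two fun p => (hM p).2)
      (hx_cont 0) (hx_cont ε) hvc
      (f := fun t => η₀ + ζ t) (fun t ht => by rw [hx 0 t ht, zero_mul, add_zero]) (hx ε) hv
      (hclose ε) t ht
  exact mul_nonneg (mul_nonneg (mul_nonneg hM0 (sq_nonneg _)) hT.le) (Real.exp_pos _).le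

/-- Directional differentiability of the solution map: if `x^ε` solves
`x^ε_t = η₀ + ζ_t + ε h_t + ∫₀ᵗ b(x^ε_s) ds`, then the difference quotients
`(x^ε - x^0)/ε` converge uniformly on `[0,T]`, as `ε → 0`, to the unique continuous
solution `v` of `v_t = h_t + ∫₀ᵗ b'(x^0_s) v_s ds`. -/
theorem directional_derivative_of_solution
    (α T η₀ : ℝ) (hα : α ∈ Set.Ioo (0 : ℝ) (1 / 2)) (hT : 0 < T)
    (b : ℝ → ℝ) (hb : ContDiff ℝ 2 b)
    (hb' : ∃ M : ℝ, ∀ x : ℝ, |deriv b x| ≤ M ∧ |deriv (deriv b) x| ≤ M)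
    (ζ h : ℝ → ℝ)
    (hζ : HolderOnIcc (1 - α) 0 T ζ) (hh : HolderOnIcc (1 - α) 0 T h)
    (x : ℝ → ℝ → ℝ)
    (hx_cont : ∀ ε : ℝ, ContinuousOn (x ε) (Set.Icc 0 T))
    (hx : ∀ ε : ℝ, ∀ t ∈ Set.Icc 0 T,
      x ε t = η₀ + ζ t + ε * h t + ∫ s in (0 : ℝ)..t, b (x ε s)) :
    ∃ v : ℝ → ℝ, ContinuousOn v (Set.Icc 0 T) ∧
      (∀ t ∈ Set.Icc 0 T,
        v t = h t + ∫ s in (0 : ℝ)..t, deriv b (x 0 s) * v s) ∧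
      (∀ v' : ℝ → ℝ, ContinuousOn v' (Set.Icc 0 T) →
        (∀ t ∈ Set.Icc 0 T,
          v' t = h t + ∫ s in (0 : ℝ)..t, deriv b (x 0 s) * v' s) →
        ∀ t ∈ Set.Icc 0 T, v' t = v t) ∧
      Filter.Tendsto
        (fun ε => sSup ((fun t => |(x ε t - x 0 t) / ε - v t|) '' Set.Icc 0 T))
        (nhdsWithin 0 {(0 : ℝ)}ᶜ) (nhds 0) :=
  directional_derivative_of_solution_general α T η₀ hα hT b hb hb' ζ h hh x hx_cont hx
end
end
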